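/- Let p be an odd prime with p ∤ m₁m₂m₃ and with (m₁m₂/p) = (m₂m₃/p) = (m₃m₁/p) = 1. If additionally p does not divide D(m,n) = Σᵢ mᵢ²nᵢ⁴ − 2Σ_{i<j} mᵢmⱼnᵢ²nⱼ², then S_p(m,n) = −4p³, where S_p(m,n) = Σ_{a∈𝔽_p^×} Σ_{x,y∈𝔽_p³} e_p(a(x₁y₁²+x₂y₂²+x₃y₃²) + m·x + n·y). -/

import Mathlib

/-- e_q(t) = exp(2πit/q). -/
noncomputable def eChar (q : ℕ) (t : ℤ) : ℂ :=
  Complex.exp (2 * Real.pi * Complex.I * (t : ℂ) / (q : ℂ))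

/-- The complete exponential sum S_q(m,n) for F(x,y) = x₁y₁² + x₂y₂² + x₃y₃²:
S_q(m,n) = Σ*_{a mod q} Σ_{x,y mod q} e_q(aF(x,y) + m·x + n·y). -/
noncomputable def expSum (q : ℕ) (m₁ m₂ m₃ n₁ n₂ n₃ : ℤ) : ℂ :=
  ∑ a ∈ (Finset.range q).filter (fun a => Nat.Coprime a q),
    ∑ x₁ ∈ Finset.range q, ∑ x₂ ∈ Finset.range q, ∑ x₃ ∈ Finset.range q,
      ∑ y₁ ∈ Finset.range q, ∑ y₂ ∈ Finset.range q, ∑ y₃ ∈ Finset.range q,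
        eChar q ((a : ℤ) * ((x₁ : ℤ) * (y₁ : ℤ) ^ 2 + (x₂ : ℤ) * (y₂ : ℤ) ^ 2
            + (x₃ : ℤ) * (y₃ : ℤ) ^ 2)
          + m₁ * (x₁ : ℤ) + m₂ * (x₂ : ℤ) + m₃ * (x₃ : ℤ)
          + n₁ * (y₁ : ℤ) + n₂ * (y₂ : ℤ) + n₃ * (y₃ : ℤ))

/-!
Summing over `x` first, `S_p(m,n) = p³ ∑_{a ≠ 0} R₁(a) R₂(a) R₃(a)`, where `Rᵢ(a)` is the sum of
`e_p(nᵢ y)` over the roots `y` of `a y² + mᵢ = 0`. The Legendre conditions give `m₂ = m₁ s₂²` and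
`m₃ = m₁ s₃²` mod `p`, so all three equations are solvable exactly when `a = -m₁/t²` with `t ≠ 0`,
with roots `±t`, `±s₂t`, `±s₃t`. Taking `t` to be the root of the first equation turns the sum into
`∑_{t ≠ 0} e_p(n₁t) (e_p(n₂s₂t) + e_p(-n₂s₂t)) (e_p(n₃s₃t) + e_p(-n₃s₃t))`, i.e. four sums
`∑_{t ≠ 0} e_p(ℓt) = -1`, one for each `ℓ = n₁ ± n₂s₂ ± n₃s₃`. These `ℓ` are nonzero because
`D(m,n) ≡ m₁² ∏ (n₁ ± n₂s₂ ± n₃s₃)`.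
-/

open Finset

section FiniteField

variable {F : Type*} [Field F] [Fintype F] [DecidableEq F]

def rootCharSum (ψ : AddChar F ℂ) (a μ ν : F) : ℂ :=
  ∑ y ∈ univ.filter (fun y => a * y ^ 2 + μ = 0), ψ (ν * y)

variable {ψ : AddChar F ℂ}

lemma sum_sum_addChar_eq_card_mul_rootCharSum (hψ : ψ.IsPrimitive) (a μ ν : F) :
    ∑ x, ∑ y, ψ (a * (x * y ^ 2) + μ * x + ν * y) = Fintype.card F * rootCharSum ψ a μ ν := by
  have hsplit (x y : F) :
      ψ (a * (x * y ^ 2) + μ * x + ν * y) = ψ (x * (a * y ^ 2 + μ)) * ψ (ν * y) := by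
    rw [← AddChar.map_add_eq_mul]
    congr 1
    ring
  simp_rw [hsplit]
  rw [sum_comm]
  simp_rw [← sum_mul, AddChar.sum_mulShift _ hψ, Nat.cast_ite, Nat.cast_zero, ite_mul, zero_mul,
    sum_ite, sum_const_zero, add_zero, rootCharSum, mul_sum]

lemma sum_ne_zero_addChar_mul_eq_neg_one (hψ : ψ.IsPrimitive) {L : F} (hL : L ≠ 0) :
    ∑ t ∈ univ.filter (· ≠ 0), ψ (L * t) = -1 := by
  rw [filter_ne', sum_erase_eq_sub (mem_univ 0)]
  simp_rw [mul_comm L, AddChar.sum_mulShift _ hψ, if_neg hL, Nat.cast_zero, zero_mul,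
    AddChar.map_zero_eq_one, zero_sub]

lemma rootCharSum_eq_of_root (hF : ringChar F ≠ 2) {a μ r : F} (ha : a ≠ 0) (hr : r ≠ 0)
    (hroot : a * r ^ 2 + μ = 0) (ν : F) :
    rootCharSum ψ a μ ν = ψ (ν * r) + ψ (-(ν * r)) := by
  have hfactor (y : F) : a * y ^ 2 + μ = a * (y ^ 2 - r ^ 2) := by linear_combination hroot
  have hroots : univ.filter (fun y => a * y ^ 2 + μ = 0) = {r, -r} := by
    ext y
    simp only [mem_filter, mem_univ, true_and, mem_insert, mem_singleton, hfactor,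
      mul_eq_zero, ha, false_or, sub_eq_zero, sq_eq_sq_iff_eq_or_eq_neg]
  have hne : r ≠ -r := fun h =>
    mul_ne_zero (Ring.two_ne_zero hF) hr (by linear_combination h)
  rw [rootCharSum, hroots, sum_pair hne, mul_neg]

lemma sum_rootCharSum_mul {μ : F} (hμ : μ ≠ 0) (ν : F) (g : F → ℂ) :
    ∑ a ∈ univ.filter (· ≠ 0), rootCharSum ψ a μ ν * g a
      = ∑ t ∈ univ.filter (· ≠ 0), ψ (ν * t) * g (-μ / t ^ 2) := by
  simp_rw [rootCharSum, sum_mul]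
  -- a root `t` of `a t² + μ = 0` determines `a = -μ / t²`
  rw [sum_comm' (t' := univ.filter (· ≠ 0)) (s' := fun t => {-μ / t ^ 2})]
  · simp_rw [sum_singleton]
  · intro a t
    simp only [mem_filter, mem_univ, true_and, mem_singleton]
    constructor
    · rintro ⟨-, h⟩
      have ht : t ≠ 0 := by rintro rfl; exact hμ (by simpa using h)
      refine ⟨?_, ht⟩
      field_simp
      linear_combination h
    · rintro ⟨rfl, ht⟩
      exact ⟨div_ne_zero (neg_ne_zero.2 hμ) (pow_ne_zero 2 ht), by field_simp; ring⟩

theorem sum_rootCharSum_mul_mul_eq_neg_four (hF : ringChar F ≠ 2) (hψ : ψ.IsPrimitive)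
    {μ s₂ s₃ : F} (hμ : μ ≠ 0) (hs₂ : s₂ ≠ 0) (hs₃ : s₃ ≠ 0) {ν₁ ν₂ ν₃ : F}
    (hν : (ν₁ + ν₂ * s₂ + ν₃ * s₃) * (ν₁ + ν₂ * s₂ - ν₃ * s₃) * (ν₁ - ν₂ * s₂ + ν₃ * s₃)
      * (ν₁ - ν₂ * s₂ - ν₃ * s₃) ≠ 0) :
    ∑ a ∈ univ.filter (· ≠ 0), rootCharSum ψ a μ ν₁ * rootCharSum ψ a (μ * s₂ ^ 2) ν₂
      * rootCharSum ψ a (μ * s₃ ^ 2) ν₃ = -4 := by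
  simp only [ne_eq, mul_eq_zero, not_or] at hν
  obtain ⟨⟨⟨h₁, h₂⟩, h₃⟩, h₄⟩ := hν
  have hexpand : ∀ t ∈ univ.filter (· ≠ 0),
      ψ (ν₁ * t) * (rootCharSum ψ (-μ / t ^ 2) (μ * s₂ ^ 2) ν₂
        * rootCharSum ψ (-μ / t ^ 2) (μ * s₃ ^ 2) ν₃)
      = ψ ((ν₁ + ν₂ * s₂ + ν₃ * s₃) * t) + ψ ((ν₁ + ν₂ * s₂ - ν₃ * s₃) * t)
        + ψ ((ν₁ - ν₂ * s₂ + ν₃ * s₃) * t) + ψ ((ν₁ - ν₂ * s₂ - ν₃ * s₃) * t) := by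
    intro t ht
    have ht : t ≠ 0 := (mem_filter.1 ht).2
    have ha : -μ / t ^ 2 ≠ 0 := div_ne_zero (neg_ne_zero.2 hμ) (pow_ne_zero 2 ht)
    have hroot (s : F) : -μ / t ^ 2 * (s * t) ^ 2 + μ * s ^ 2 = 0 := by field_simp; ring
    rw [rootCharSum_eq_of_root hF ha (mul_ne_zero hs₂ ht) (hroot s₂),
      rootCharSum_eq_of_root hF ha (mul_ne_zero hs₃ ht) (hroot s₃)]
    simp only [mul_add, add_mul, ← AddChar.map_add_eq_mul]
    ring_nf
  simp_rw [mul_assoc (rootCharSum ψ _ μ ν₁)]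
  rw [sum_rootCharSum_mul hμ, sum_congr rfl hexpand, sum_add_distrib, sum_add_distrib,
    sum_add_distrib, sum_ne_zero_addChar_mul_eq_neg_one hψ h₁,
    sum_ne_zero_addChar_mul_eq_neg_one hψ h₂, sum_ne_zero_addChar_mul_eq_neg_one hψ h₃,
    sum_ne_zero_addChar_mul_eq_neg_one hψ h₄]
  norm_num

end FiniteField

lemma sum_mul_sum_mul_sum {R α β γ : Type*} [CommSemiring R] (s : Finset α) (t : Finset β)
    (u : Finset γ) (f : α → R) (g : β → R) (h : γ → R) :
    (∑ i ∈ s, f i) * (∑ j ∈ t, g j) * (∑ k ∈ u, h k)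
      = ∑ i ∈ s, ∑ j ∈ t, ∑ k ∈ u, f i * g j * h k := by
  rw [sum_mul_sum, sum_mul]
  exact sum_congr rfl fun i _ => by rw [sum_mul_sum]

lemma sum_sum_mul_sum_sum_mul_sum_sum {R α β : Type*} [CommSemiring R] [Fintype α] [Fintype β]
    (f₁ f₂ f₃ : α → β → R) :
    ∑ x₁, ∑ x₂, ∑ x₃, ∑ y₁, ∑ y₂, ∑ y₃, f₁ x₁ y₁ * f₂ x₂ y₂ * f₃ x₃ y₃
      = (∑ x, ∑ y, f₁ x y) * (∑ x, ∑ y, f₂ x y) * (∑ x, ∑ y, f₃ x y) := by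
  simp only [sum_mul_sum_mul_sum]

section ZMod

open ZMod

variable {q : ℕ} [NeZero q]

lemma eChar_eq_stdAddChar (t : ℤ) : eChar q t = stdAddChar (t : ZMod q) := by
  rw [stdAddChar_coe]
  rfl

lemma sum_range_eq_sum_zmod {M : Type*} [AddCommMonoid M] (g : ZMod q → M) :
    ∑ i ∈ range q, g i = ∑ x, g x :=
  sum_nbij' (fun i => (i : ZMod q)) val (by simp) (by simp [val_lt])
    (fun i hi => val_cast_of_lt (mem_range.1 hi)) (fun x _ => natCast_zmod_val x)
    (fun _ _ => rfl)

lemma sum_range_coprime_eq_sum_isUnit {M : Type*} [AddCommMonoid M] (g : ZMod q → M) :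
    ∑ i ∈ (range q).filter (Nat.Coprime · q), g i = ∑ x ∈ univ.filter IsUnit, g x := by
  simp_rw [sum_filter, ← isUnit_iff_coprime]
  exact sum_range_eq_sum_zmod fun x => if IsUnit x then g x else 0

lemma expSum_eq_sum_mul_mul (m₁ m₂ m₃ n₁ n₂ n₃ : ℤ) :
    expSum q m₁ m₂ m₃ n₁ n₂ n₃ = ∑ a ∈ univ.filter IsUnit,
      (∑ x : ZMod q, ∑ y : ZMod q,
            stdAddChar (a * (x * y ^ 2) + (m₁ : ZMod q) * x + (n₁ : ZMod q) * y))
        * (∑ x : ZMod q, ∑ y : ZMod q,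
            stdAddChar (a * (x * y ^ 2) + (m₂ : ZMod q) * x + (n₂ : ZMod q) * y))
        * (∑ x : ZMod q, ∑ y : ZMod q,
            stdAddChar (a * (x * y ^ 2) + (m₃ : ZMod q) * x + (n₃ : ZMod q) * y)) := by
  simp only [← sum_sum_mul_sum_sum_mul_sum_sum, ← AddChar.map_add_eq_mul]
  simp only [expSum, eChar_eq_stdAddChar]
  push_cast
  simp only [← sum_range_eq_sum_zmod, ← sum_range_coprime_eq_sum_isUnit]
  congr! 8
  ring

end ZMod

lemma exists_eq_mul_sq_of_legendreSym_mul_eq_one {p : ℕ} [Fact p.Prime] {a b : ℤ}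
    (h : legendreSym p (a * b) = 1) :
    (a : ZMod p) ≠ 0 ∧ ∃ s : ZMod p, s ≠ 0 ∧ (b : ZMod p) = a * s ^ 2 := by
  have hab : ((a * b : ℤ) : ZMod p) ≠ 0 := by
    rw [Ne, ← legendreSym.eq_zero_iff, h]
    exact one_ne_zero
  obtain ⟨w, hw⟩ := (legendreSym.eq_one_iff p hab).1 h
  push_cast at hab hw
  have ha : (a : ZMod p) ≠ 0 := left_ne_zero_of_mul hab
  have hw0 : w ≠ 0 := by rintro rfl; exact hab (by rw [hw, mul_zero])
  refine ⟨ha, w / a, div_ne_zero hw0 ha, ?_⟩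
  field_simp
  linear_combination hw

theorem stmt13_general (p : ℕ) [hp : Fact p.Prime] (hp2 : p ≠ 2)
    (m₁ m₂ m₃ n₁ n₂ n₃ : ℤ)
    (h12 : legendreSym p (m₁ * m₂) = 1)
    (h31 : legendreSym p (m₃ * m₁) = 1)
    (hD : ¬ (p : ℤ) ∣ (m₁ ^ 2 * n₁ ^ 4 + m₂ ^ 2 * n₂ ^ 4 + m₃ ^ 2 * n₃ ^ 4
      - 2 * (m₁ * m₂ * n₁ ^ 2 * n₂ ^ 2 + m₁ * m₃ * n₁ ^ 2 * n₃ ^ 2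
        + m₂ * m₃ * n₂ ^ 2 * n₃ ^ 2))) :
    expSum p m₁ m₂ m₃ n₁ n₂ n₃ = -4 * (p : ℂ) ^ 3 := by
  obtain ⟨hm₁, s₂, hs₂, hm₂⟩ := exists_eq_mul_sq_of_legendreSym_mul_eq_one h12
  obtain ⟨-, s₃, hs₃, hm₃⟩ :=
    exists_eq_mul_sq_of_legendreSym_mul_eq_one (p := p) (a := m₁) (b := m₃) (by rwa [mul_comm])
  have hν : ((n₁ : ZMod p) + n₂ * s₂ + n₃ * s₃) * (n₁ + n₂ * s₂ - n₃ * s₃)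
      * (n₁ - n₂ * s₂ + n₃ * s₃) * (n₁ - n₂ * s₂ - n₃ * s₃) ≠ 0 := by
    rw [← ZMod.intCast_zmod_eq_zero_iff_dvd] at hD
    push_cast [hm₂, hm₃] at hD
    refine right_ne_zero_of_mul (a := (m₁ : ZMod p) ^ 2) ?_
    convert hD using 1
    ring
  have hF : ringChar (ZMod p) ≠ 2 := by rwa [ZMod.ringChar_zmod_n]
  have hψ := ZMod.isPrimitive_stdAddChar p
  simp only [expSum_eq_sum_mul_mul, isUnit_iff_ne_zero,
    sum_sum_addChar_eq_card_mul_rootCharSum hψ, ZMod.card, hm₂, hm₃]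
  rw [← sum_rootCharSum_mul_mul_eq_neg_four hF hψ hm₁ hs₂ hs₃ hν, sum_mul]
  exact sum_congr rfl fun a _ => by ring

/-- If p is an odd prime, p ∤ m₁m₂m₃, (m₁m₂/p) = (m₂m₃/p) = (m₃m₁/p) = 1 and
p ∤ D(m,n), then S_p(m,n) = −4p³. -/
theorem stmt13 (p : ℕ) [hp : Fact p.Prime] (hp2 : p ≠ 2)
    (m₁ m₂ m₃ n₁ n₂ n₃ : ℤ) (hm : ¬ (p : ℤ) ∣ m₁ * m₂ * m₃)
    (h12 : legendreSym p (m₁ * m₂) = 1) (h23 : legendreSym p (m₂ * m₃) = 1)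
    (h31 : legendreSym p (m₃ * m₁) = 1)
    (hD : ¬ (p : ℤ) ∣ (m₁ ^ 2 * n₁ ^ 4 + m₂ ^ 2 * n₂ ^ 4 + m₃ ^ 2 * n₃ ^ 4
      - 2 * (m₁ * m₂ * n₁ ^ 2 * n₂ ^ 2 + m₁ * m₃ * n₁ ^ 2 * n₃ ^ 2
        + m₂ * m₃ * n₂ ^ 2 * n₃ ^ 2))) :
    expSum p m₁ m₂ m₃ n₁ n₂ n₃ = -4 * (p : ℂ) ^ 3 :=
  stmt13_general p (hp := hp) hp2 m₁ m₂ m₃ n₁ n₂ n₃ h12 h31 hD
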